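/- Let X and Y be Banach spaces and T : X* → Y** a weak*-to-weak continuous finite-rank operator. Then range T* ⊆ X (identifying X inside X**), and setting Z = range T* with inclusion j : Z → X, there exists a weak*-to-weak continuous finite-rank operator S : Z* → Y** with T = S ∘ j*, and moreover ‖S‖ = ‖T‖ and j*(B_{X*}) = B_{Z*}. -/

import Mathlib

open NormedSpace

namespace NormedSpace

/-- The topological dual of a seminormed space (restored: removed from Mathlib). -/
abbrev Dual (𝕜 : Type*) [NontriviallyNormedField 𝕜] (E : Type*) [SeminormedAddCommGroup E]
    [NormedSpace 𝕜 E] : Type _ := E →L[𝕜] 𝕜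

end NormedSpace

set_option maxHeartbeats 1000000

/-- The Banach-space adjoint (dual map) of a continuous linear map. -/
noncomputable def dualOp {X Y : Type*} [NormedAddCommGroup X] [NormedSpace ℝ X]
    [NormedAddCommGroup Y] [NormedSpace ℝ Y] (T : X →L[ℝ] Y) :
    Dual ℝ Y →L[ℝ] Dual ℝ X :=
  (ContinuousLinearMap.compSL X Y ℝ (RingHom.id ℝ) (RingHom.id ℝ)).flip T

/-- The annihilator of a subspace in the continuous dual. -/
noncomputable def ann {X : Type*} [NormedAddCommGroup X] [NormedSpace ℝ X]
    (U : Submodule ℝ X) : Submodule ℝ (Dual ℝ X) where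
  carrier := {f | ∀ u ∈ U, f u = 0}
  zero_mem' := by intro u hu; simp
  add_mem' := by intro f g hf hg u hu; simp [hf u hu, hg u hu]
  smul_mem' := by intro c f hf u hu; simp [hf u hu]

/-- A continuous linear map has finite rank. -/
def FinRank {X Y : Type*} [NormedAddCommGroup X] [NormedSpace ℝ X]
    [NormedAddCommGroup Y] [NormedSpace ℝ Y] (T : X →L[ℝ] Y) : Prop :=
  FiniteDimensional ℝ (LinearMap.range (T : X →ₗ[ℝ] Y))

/-- Part (c) of the proof of the Main Lemma: factorization of a weak*-to-weak
continuous finite-rank operator `T : X* → Y**` through `Z = ran T* ⊆ X`. -/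
theorem wstar_finite_rank_factorization
    (X Y : Type*) [NormedAddCommGroup X] [NormedSpace ℝ X] [CompleteSpace X]
    [NormedAddCommGroup Y] [NormedSpace ℝ Y] [CompleteSpace Y]
    (T : Dual ℝ X →L[ℝ] Dual ℝ (Dual ℝ Y))
    (n : ℕ) (x : Fin n → X) (y : Fin n → Dual ℝ (Dual ℝ Y))
    (hT : ∀ f : Dual ℝ X, T f = ∑ i, f (x i) • y i) :
    (∀ g : Dual ℝ (Dual ℝ (Dual ℝ Y)), ∃ z : X,
      dualOp (X := Dual ℝ X) (Y := Dual ℝ (Dual ℝ Y)) T g = inclusionInDoubleDual ℝ X z) ∧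
    ∃ Z : Submodule ℝ X, FiniteDimensional ℝ Z ∧
      Submodule.map (inclusionInDoubleDual ℝ X).toLinearMap Z
        = LinearMap.range
            (dualOp (X := Dual ℝ X) (Y := Dual ℝ (Dual ℝ Y)) T).toLinearMap ∧
      ∃ S : Dual ℝ Z →L[ℝ] Dual ℝ (Dual ℝ Y),
        (∃ (m : ℕ) (z : Fin m → Z) (w : Fin m → Dual ℝ (Dual ℝ Y)),
          ∀ g : Dual ℝ Z, S g = ∑ i, g (z i) • w i) ∧
        T = S.comp (dualOp Z.subtypeL) ∧ ‖S‖ = ‖T‖ ∧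
        (dualOp Z.subtypeL) '' (Metric.closedBall 0 1) = Metric.closedBall 0 1 := by
  classical
  -- Part (a): the adjoint lands in (the canonical image of) X.
  have parta : ∀ g : Dual ℝ (Dual ℝ (Dual ℝ Y)),
      dualOp (X := Dual ℝ X) (Y := Dual ℝ (Dual ℝ Y)) T g
        = inclusionInDoubleDual ℝ X (∑ i, g (y i) • x i) := by
    intro g
    ext f
    show g (T f) = f (∑ i, g (y i) • x i)
    rw [hT f]
    simp [map_sum, mul_comm]
  -- W = span of the y's, with a basis.
  set W : Submodule ℝ (Dual ℝ (Dual ℝ Y)) := Submodule.span ℝ (Set.range y) with hW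
  haveI hWfd : FiniteDimensional ℝ W := FiniteDimensional.span_of_finite ℝ (Set.finite_range y)
  haveI : Module.Free ℝ W := Module.Free.of_divisionRing ℝ W
  set m : ℕ := Module.finrank ℝ W with hm
  let b : Module.Basis (Fin m) ℝ W := Module.finBasis ℝ W
  let yW : Fin n → W := fun i => ⟨y i, Submodule.subset_span (Set.mem_range_self i)⟩
  let c : Fin n → Fin m → ℝ := fun i j => b.repr (yW i) j
  let u : Fin m → X := fun j => ∑ i, c i j • x i
  let w : Fin m → Dual ℝ (Dual ℝ Y) := fun j => (b j : Dual ℝ (Dual ℝ Y))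
  -- y i = ∑ j, c i j • w j
  have hy : ∀ i, y i = ∑ j, c i j • w j := by
    intro i
    have h1 := b.sum_repr (yW i)
    have h2 := congrArg (Submodule.subtype W) h1
    simp only [map_sum, map_smul, Submodule.subtype_apply] at h2
    exact h2.symm
  have hfu : ∀ (f : Dual ℝ X) j, f (u j) = ∑ i, c i j * f (x i) := by
    intro f j
    show f (∑ i, c i j • x i) = _
    simp [map_sum, mul_comm]
  -- T f = ∑ j, f (u j) • w j
  have hTu : ∀ f : Dual ℝ X, T f = ∑ j, f (u j) • w j := by
    intro f
    rw [hT f]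
    calc ∑ i, f (x i) • y i
        = ∑ i, ∑ j, (c i j * f (x i)) • w j := by
          refine Finset.sum_congr rfl fun i _ => ?_
          rw [hy i, Finset.smul_sum]
          refine Finset.sum_congr rfl fun j _ => ?_
          rw [smul_smul, mul_comm]
      _ = ∑ j, ∑ i, (c i j * f (x i)) • w j := Finset.sum_comm
      _ = ∑ j, f (u j) • w j := by
          refine Finset.sum_congr rfl fun j _ => ?_
          rw [← Finset.sum_smul, hfu]
  -- dual functionals picking out the coordinates w.r.t. b
  have hGex : ∀ j : Fin m, ∃ G : Dual ℝ (Dual ℝ (Dual ℝ Y)),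
      ∀ v : W, G v = b.repr v j := by
    intro j
    obtain ⟨G, hG, -⟩ := exists_extension_norm_eq (W : Subspace ℝ (Dual ℝ (Dual ℝ Y)))
      (LinearMap.toContinuousLinearMap (b.coord j))
    exact ⟨G, fun v => by simpa [Module.Basis.coord_apply] using hG v⟩
  choose G hG using hGex
  have hGy : ∀ j i, G j (y i) = c i j := fun j i => hG j (yW i)
  -- adjoint of T sends G j to ι (u j)
  have hGu : ∀ j, dualOp (X := Dual ℝ X) (Y := Dual ℝ (Dual ℝ Y)) T (G j)
      = inclusionInDoubleDual ℝ X (u j) := by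
    intro j
    rw [parta (G j)]
    congr 1
    exact Finset.sum_congr rfl fun i _ => by rw [hGy j i]
  refine ⟨fun g => ⟨∑ i, g (y i) • x i, parta g⟩, ?_⟩
  -- The subspace Z
  set Z : Submodule ℝ X := Submodule.span ℝ (Set.range u) with hZ
  haveI hZfd : FiniteDimensional ℝ Z := FiniteDimensional.span_of_finite ℝ (Set.finite_range u)
  refine ⟨Z, hZfd, ?_, ?_⟩
  · -- map ι Z = range T*
    apply le_antisymm
    · rw [hZ, Submodule.map_span, Submodule.span_le]
      rintro ξ ⟨_, ⟨j, rfl⟩, rfl⟩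
      exact ⟨G j, hGu j⟩
    · rintro ξ ⟨g, rfl⟩
      refine ⟨∑ i, g (y i) • x i, ?_, (parta g).symm⟩
      have : ∑ i, g (y i) • x i = ∑ j, g (w j) • u j := by
        calc ∑ i, g (y i) • x i
            = ∑ i, ∑ j, (c i j * g (w j)) • x i := by
              refine Finset.sum_congr rfl fun i _ => ?_
              rw [hy i, map_sum, ← Finset.sum_smul]
              congr 1
              exact Finset.sum_congr rfl fun j _ => by rw [map_smul, smul_eq_mul]
          _ = ∑ j, ∑ i, (c i j * g (w j)) • x i := Finset.sum_comm
          _ = ∑ j, g (w j) • u j := by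
              refine Finset.sum_congr rfl fun j _ => ?_
              rw [Finset.smul_sum]
              refine Finset.sum_congr rfl fun i _ => ?_
              rw [smul_smul, mul_comm]
      rw [this]
      exact Submodule.sum_mem _ fun j _ => Submodule.smul_mem _ _
        (Submodule.subset_span (Set.mem_range_self j))
  -- The operator S
  let z : Fin m → Z := fun j => ⟨u j, Submodule.subset_span (Set.mem_range_self j)⟩
  set S : Dual ℝ Z →L[ℝ] Dual ℝ (Dual ℝ Y) :=
    ∑ j, ContinuousLinearMap.smulRight (inclusionInDoubleDual ℝ Z (z j)) (w j) with hS
  have hSapp : ∀ g : Dual ℝ Z, S g = ∑ j, g (z j) • w j := by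
    intro g
    rw [hS]
    simp [ContinuousLinearMap.sum_apply, ContinuousLinearMap.smulRight_apply, dual_def]
  -- restriction map
  have hrestr : ∀ (f : Dual ℝ X) (v : Z), dualOp Z.subtypeL f v = f v := fun f v => rfl
  have hcomp : ∀ f : Dual ℝ X, T f = S (dualOp Z.subtypeL f) := by
    intro f
    rw [hSapp, hTu f]
    exact Finset.sum_congr rfl fun j _ => by rw [hrestr f (z j)]
  have hcomp' : T = S.comp (dualOp Z.subtypeL) := by
    ext f φ
    rw [hcomp f]; rfl
  -- Hahn-Banach extensions from Z
  have hext : ∀ g : Dual ℝ Z, ∃ f : Dual ℝ X,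
      dualOp Z.subtypeL f = g ∧ ‖f‖ = ‖g‖ := by
    intro g
    obtain ⟨f, hf, hnf⟩ := exists_extension_norm_eq (Z : Subspace ℝ X) g
    refine ⟨f, ?_, hnf⟩
    ext v
    exact hf v
  -- norm of restriction
  have hjle : ∀ f : Dual ℝ X, ‖dualOp Z.subtypeL f‖ ≤ ‖f‖ := by
    intro f
    refine ContinuousLinearMap.opNorm_le_bound _ (norm_nonneg f) fun v => ?_
    rw [hrestr f v]
    calc ‖f v‖ ≤ ‖f‖ * ‖(v : X)‖ := f.le_opNorm _
      _ = ‖f‖ * ‖v‖ := by rw [Submodule.norm_coe]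
  have hnorm : ‖S‖ = ‖T‖ := by
    apply le_antisymm
    · refine ContinuousLinearMap.opNorm_le_bound _ (norm_nonneg T) fun g => ?_
      obtain ⟨f, hf, hnf⟩ := hext g
      calc ‖S g‖ = ‖T f‖ := by rw [← hf, ← hcomp]
        _ ≤ ‖T‖ * ‖f‖ := T.le_opNorm f
        _ = ‖T‖ * ‖g‖ := by rw [hnf]
    · refine ContinuousLinearMap.opNorm_le_bound _ (norm_nonneg S) fun f => ?_
      rw [hcomp f]
      calc ‖S (dualOp Z.subtypeL f)‖ ≤ ‖S‖ * ‖dualOp Z.subtypeL f‖ := S.le_opNorm _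
        _ ≤ ‖S‖ * ‖f‖ := by
            exact mul_le_mul_of_nonneg_left (hjle f) (norm_nonneg S)
  refine ⟨S, ⟨m, z, w, hSapp⟩, hcomp', hnorm, ?_⟩
  -- j* maps the unit ball onto the unit ball
  ext g
  simp only [Set.mem_image, Metric.mem_closedBall, dist_zero_right]
  constructor
  · rintro ⟨f, hf, rfl⟩
    exact le_trans (hjle f) hf
  · intro hg
    obtain ⟨f, hf, hnf⟩ := hext g
    exact ⟨f, by rw [hnf]; exact hg, hf⟩
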